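/- arXiv:2410.23087 — 2 statements merged into one kernel-verified Lean document; each statement's English description precedes it below -/
import Mathlib

section
/- For all x in the open interval (0,1), the function H(x) = x·log(2x) + (1-x)·log(2(1-x)) satisfies H(x) ≤ 16·(1/2 - x)². -/
theorem stmt_1 (x : ℝ) (hx : x ∈ Set.Ioo (0:ℝ) 1) :
    x * Real.log (2*x) + (1-x) * Real.log (2*(1-x)) ≤ 16 * (1/2 - x)^2 := by
  obtain ⟨h0, h1⟩ := hx
  have l1 := Real.log_le_sub_one_of_pos (by linarith : (0:ℝ) < 2*x)
  have l2 := Real.log_le_sub_one_of_pos (by linarith : (0:ℝ) < 2*(1-x))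
  nlinarith [mul_le_mul_of_nonneg_left l1 h0.le,
    mul_le_mul_of_nonneg_left l2 (by linarith : (0:ℝ) ≤ 1-x)]
end

section
/- Fix w_q ∈ (0,1), set α = 1 + 1/log(w_q), and for t_u ∈ (0,1), t_u ≠ 1/2, define F(t_u, 0) = α + (α·log(1 - w_q) - t_u·log(1 - 2w_q)) / d(t_u ‖ 1/2), where d(t ‖ 1/2) = t·log(2t) + (1-t)·log(2(1-t)). If additionally |t_u - 1/2| ≤ -c/log(w_q) for a sufficiently small absolute constant c > 0 and w_q is sufficiently small, then α·log(1 - w_q) - t_u·log(1 - 2w_q) ≥ 0, and hence F(t_u, 0) ≥ α. -/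
theorem stmt_18 :
    ∃ c > (0:ℝ), ∃ w0 > (0:ℝ), ∀ wq : ℝ, 0 < wq → wq < w0 →
      ∀ tu : ℝ, tu ∈ Set.Ioo (0:ℝ) 1 → tu ≠ 1/2 →
        |tu - 1/2| ≤ -c / Real.log wq →
        (1 + 1 / Real.log wq) * Real.log (1 - wq) - tu * Real.log (1 - 2*wq) ≥ 0 ∧
        (1 + 1 / Real.log wq) +
            ((1 + 1 / Real.log wq) * Real.log (1 - wq) - tu * Real.log (1 - 2*wq)) /
              (tu * Real.log (2*tu) + (1 - tu) * Real.log (2*(1 - tu)))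
          ≥ 1 + 1 / Real.log wq := by
  refine ⟨1/4, by norm_num, 1/2, by norm_num, ?_⟩
  intro wq hwq hwq2 tu ⟨htu0, htu1⟩ _ habs
  have hL : Real.log wq < 0 := Real.log_neg hwq (by linarith)
  have h1w : (0:ℝ) < 1 - wq := by linarith
  have h2w : (0:ℝ) < 1 - 2*wq := by linarith
  have hlog1 : Real.log (1 - wq) < 0 := Real.log_neg h1w (by linarith)
  -- log(1-2wq) ≤ 2 log(1-wq)
  have hsq : Real.log (1 - 2*wq) ≤ 2 * Real.log (1 - wq) := by
    have : (1 - 2*wq) ≤ (1 - wq)^2 := by nlinarith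
    calc Real.log (1 - 2*wq) ≤ Real.log ((1 - wq)^2) := Real.log_le_log h2w this
      _ = 2 * Real.log (1 - wq) := by rw [Real.log_pow]; push_cast; ring
  -- 2 tu ≥ α
  have hα : 1 + 1 / Real.log wq ≤ 2 * tu := by
    have hLinv : 1 / Real.log wq < 0 := one_div_neg.mpr hL
    have h1 := (abs_le.mp habs).1
    have e1 : -(-(1/4) / Real.log wq) = (1 / Real.log wq) * (1/4) := by ring
    rw [e1] at h1
    linarith
  -- N ≥ 0
  have hN : (1 + 1 / Real.log wq) * Real.log (1 - wq) - tu * Real.log (1 - 2*wq) ≥ 0 := by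
    have h3 : tu * Real.log (1 - 2*wq) ≤ tu * (2 * Real.log (1 - wq)) :=
      mul_le_mul_of_nonneg_left hsq (le_of_lt htu0)
    nlinarith
  refine ⟨hN, ?_⟩
  -- D ≥ 0 via log x ≥ 1 - 1/x
  have hD : 0 ≤ tu * Real.log (2*tu) + (1 - tu) * Real.log (2*(1 - tu)) := by
    have key : ∀ x : ℝ, 0 < x → 1 - 1/x ≤ Real.log x := by
      intro x hx
      have h := Real.log_le_sub_one_of_pos (show (0:ℝ) < 1/x by positivity)
      rw [Real.log_div one_ne_zero (ne_of_gt hx), Real.log_one] at h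
      linarith
    have k1 := key (2*tu) (by linarith)
    have k2 := key (2*(1-tu)) (by linarith)
    have e1 : tu * (1 - 1/(2*tu)) ≤ tu * Real.log (2*tu) :=
      mul_le_mul_of_nonneg_left k1 (le_of_lt htu0)
    have e2 : (1-tu) * (1 - 1/(2*(1-tu))) ≤ (1-tu) * Real.log (2*(1-tu)) :=
      mul_le_mul_of_nonneg_left k2 (by linarith)
    have f1 : tu * (1 - 1/(2*tu)) = tu - 1/2 := by field_simp
    have f2 : (1-tu) * (1 - 1/(2*(1-tu))) = (1-tu) - 1/2 := by
      have : (1:ℝ) - tu ≠ 0 := by linarith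
      field_simp
    linarith
  have := div_nonneg hN hD
  linarith
end
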